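/- Let G be a finite game structure in which β^0 is the finest coarsening of the players' observations, i.e., β^0(v) = β^0(v') exactly when (v,v') lies in the equivalence relation on V generated by the pairs {(u,u') : β^i(u) = β^i(u') for some player i}. Call a state v a perfect-information state if β^i(v) ≠ β^i(v') for every player i ∈ {1,…,n} and every state v' ≠ v. If every cycle of the directed graph on V with edge set {(v,v') : (v,a,v') ∈ Δ for some a ∈ A} contains a perfect-information state, then G has recurring certainty. -/

import Mathlib

/-- The state reached after following the word `w` (a list of (action profile, state) pairs)
starting from state `v`: the last state of `w`, or `v` if `w` is empty. -/
def endFrom {α V : Type} : V → List (α × V) → V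
  | v, [] => v
  | _, p :: w => endFrom p.2 w

/-- An `n`-player game structure with imperfect information: states `V` with an initial state,
action sets `A i` for each player, a total move relation labelled by action profiles,
observation functions `obs i : V → B i` for each player, and the observation function
`obs0 : V → B0` of the fictitious, less informed Player 0. -/
structure GameStructure (n : ℕ) (V : Type) (A : Fin n → Type) (B : Fin n → Type)
    (B0 : Type) where
  init : V
  move : V → (∀ i, A i) → V → Prop
  move_total : ∀ v a, ∃ v', move v a v'
  obs : ∀ i : Fin n, V → B i
  obs0 : V → B0

namespace GameStructure

variable {n : ℕ} {V : Type} {A : Fin n → Type} {B : Fin n → Type} {B0 : Type}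

variable (G : GameStructure n V A B B0)

/-- `G.IsHistFrom v w` holds if the word `w` describes a sequence of legal moves from `v`. -/
def IsHistFrom : V → List ((∀ i, A i) × V) → Prop
  | _, [] => True
  | v, p :: w => G.move v p.1 p.2 ∧ IsHistFrom p.2 w

/-- `w` encodes a history: a legal sequence of moves from the initial state.
The history `v₀ a₀ v₁ … a_{ℓ-1} v_ℓ` is encoded as the word `(a₀,v₁) … (a_{ℓ-1},v_ℓ)`. -/
def IsHistWord (w : List ((∀ i, A i) × V)) : Prop := G.IsHistFrom G.init w

/-- The final state of the history encoded by `w`. -/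
def endState (w : List ((∀ i, A i) × V)) : V := endFrom G.init w

/-- The sequence of Player 0's observations of the states of the history encoded by `w`
(the observation of the initial state is omitted, as it is fixed). Two histories are
`∼⁰`-indistinguishable iff their `obs0Trace`s are equal (which forces equal length). -/
def obs0Trace (w : List ((∀ i, A i) × V)) : List B0 := w.map fun p => G.obs0 p.2

/-- The grand coalition attains certainty at the history `w`: every history
`∼⁰`-indistinguishable from `w` ends at the same state. -/
def Certain (w : List ((∀ i, A i) × V)) : Prop :=
  ∀ w', G.IsHistWord w' → G.obs0Trace w' = G.obs0Trace w → G.endState w' = G.endState w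

/-- A play: an infinite legal sequence of states and action profiles from the initial state. -/
structure Play (G : GameStructure n V A B B0) where
  st : ℕ → V
  act : ℕ → ∀ i, A i
  init_eq : st 0 = G.init
  valid : ∀ k, G.move (st k) (act k) (st (k + 1))

/-- The word encoding the prefix history of length `ℓ` of the play `π`. -/
def Play.prefixWord {G : GameStructure n V A B B0} (π : G.Play) (ℓ : ℕ) :
    List ((∀ i, A i) × V) :=
  (List.range ℓ).map fun k => (π.act k, π.st (k + 1))

/-- The play `π` has recurring certainty: the grand coalition attains certainty at
infinitely many of its finite prefixes. -/
def Play.HasRecurringCertainty {G : GameStructure n V A B B0} (π : G.Play) : Prop :=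
  ∀ m : ℕ, ∃ ℓ, m ≤ ℓ ∧ G.Certain (π.prefixWord ℓ)

/-- The game structure `G` has recurring certainty: every play does. -/
def RecurringCertainty : Prop := ∀ π : G.Play, π.HasRecurringCertainty

/-- `G` has periodic certainty with bound `t`: along every play, every prefix history can be
extended by at most `t` further rounds, within the play, to a history at which the grand
coalition attains certainty. -/
def PeriodicWithBound (t : ℕ) : Prop :=
  ∀ π : G.Play, ∀ m : ℕ, ∃ ℓ, m ≤ ℓ ∧ ℓ ≤ m + t ∧ G.Certain (π.prefixWord ℓ)

/-- `G` has periodic certainty: periodic certainty with some uniform bound `t`. -/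
def PeriodicCertainty : Prop := ∃ t, G.PeriodicWithBound t

end GameStructure

/-- A perfect-information state: every player distinguishes `v` from every other state. -/
def GameStructure.PerfectInfo {n : ℕ} {V : Type} {A : Fin n → Type} {B : Fin n → Type}
    {B0 : Type} (G : GameStructure n V A B B0) (v : V) : Prop :=
  ∀ i : Fin n, ∀ v' : V, v' ≠ v → G.obs i v' ≠ G.obs i v

/-- The edge relation of the directed graph underlying the game structure. -/
def GameStructure.Edge {n : ℕ} {V : Type} {A : Fin n → Type} {B : Fin n → Type}
    {B0 : Type} (G : GameStructure n V A B B0) (v v' : V) : Prop :=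
  ∃ a, G.move v a v'

/-!
A perfect-information state is alone in its class of the equivalence generated by the players'
indistinguishability relations, so when `β⁰` is the finest coarsening it is recognised by
Player 0, and the grand coalition is certain at every history ending there. By pigeonhole, any
`|V| + 1` consecutive states of a play contain a cycle, hence a perfect-information state.
-/

theorem Relation.EqvGen.iff_of_rel_iff {α : Type*} {r : α → α → Prop} {P : α → Prop} {a b : α}
    (hr : ∀ x y, r x y → (P x ↔ P y)) (h : Relation.EqvGen r a b) : P a ↔ P b := by
  induction h with
  | rel x y hxy => exact hr x y hxy
  | refl => exact Iff.rfl
  | symm _ _ _ ih => exact ih.symm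
  | trans _ _ _ _ _ ih₁ ih₂ => exact ih₁.trans ih₂

theorem List.isChain_map_range' {α : Type*} {r : α → α → Prop} {f : ℕ → α}
    (hf : ∀ k, r (f k) (f (k + 1))) (s d : ℕ) : IsChain r ((range' s d).map f) := by
  rw [isChain_map]
  exact (isChain_range' s d 1).imp (by rintro a _ rfl; exact hf a)

theorem frequently_atTop_of_forall_cycle_exists {V : Type*} [Finite V] {r : V → V → Prop}
    {p : V → Prop}
    (hcycle : ∀ v c, c ≠ [] → List.IsChain r (v :: c) → c.getLast? = some v → ∃ u ∈ c, p u)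
    {f : ℕ → V} (hf : ∀ k, r (f k) (f (k + 1))) : ∃ᶠ t in Filter.atTop, p (f t) := by
  refine Filter.frequently_atTop.2 fun m => ?_
  obtain ⟨a, b, hab, heq⟩ : ∃ a b, a < b ∧ f (m + a) = f (m + b) := by
    obtain ⟨a, b, hne, heq⟩ := Finite.exists_ne_map_eq_of_infinite fun i => f (m + i)
    rcases hne.lt_or_gt with h | h
    exacts [⟨a, b, h, heq⟩, ⟨b, a, h, heq.symm⟩]
  obtain ⟨d, rfl⟩ := Nat.exists_eq_add_of_lt hab
  obtain ⟨u, hu, hpu⟩ := hcycle (f (m + a)) ((List.range' (m + a + 1) (d + 1)).map f)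
    (by simp) (by rw [← List.map_cons, ← List.range'_succ]; exact List.isChain_map_range' hf _ _)
    (by simp [List.range'_concat, heq, Nat.add_assoc, Nat.add_comm 1])
  obtain ⟨t, ht, rfl⟩ := List.mem_map.1 hu
  exact ⟨t, by grind, hpu⟩

theorem endFrom_eq_getLastD {α V : Type} (v : V) (w : List (α × V)) :
    endFrom v w = (w.map Prod.snd).getLastD v := by
  induction w generalizing v with
  | nil => rfl
  | cons p w ih => rw [endFrom, ih, List.map_cons, List.getLastD_cons]

namespace GameStructure

variable {n : ℕ} {V : Type} {A : Fin n → Type} {B : Fin n → Type} {B0 : Type}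
  {G : GameStructure n V A B B0}

theorem obs0_endState (w : List ((∀ i, A i) × V)) :
    G.obs0 (G.endState w) = (G.obs0Trace w).getLastD (G.obs0 G.init) := by
  rw [endState, endFrom_eq_getLastD, obs0Trace, ← List.getLastD_map (f := G.obs0), List.map_map]
  rfl

theorem Play.endState_prefixWord (π : G.Play) (ℓ : ℕ) : G.endState (π.prefixWord ℓ) = π.st ℓ := by
  rw [endState, endFrom_eq_getLastD, prefixWord, List.map_map]
  cases ℓ with
  | zero => simp [π.init_eq]
  | succ ℓ => simp [List.range_succ]

theorem Play.edge (π : G.Play) (k : ℕ) : G.Edge (π.st k) (π.st (k + 1)) := ⟨π.act k, π.valid k⟩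

theorem PerfectInfo.eq_of_eqvGen {u v : V} (hv : G.PerfectInfo v)
    (h : Relation.EqvGen (fun u u' => ∃ i, G.obs i u = G.obs i u') u v) : u = v := by
  refine (h.iff_of_rel_iff (P := (· = v)) fun x y ⟨i, hxy⟩ => ⟨?_, ?_⟩).2 rfl
  · rintro rfl
    exact not_imp_not.1 (hv i y) hxy.symm
  · rintro rfl
    exact not_imp_not.1 (hv i x) hxy

theorem certain_of_perfectInfo_endState
    (hfine : ∀ v v' : V, G.obs0 v = G.obs0 v' →
      Relation.EqvGen (fun u u' => ∃ i, G.obs i u = G.obs i u') v v')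
    {w : List ((∀ i, A i) × V)} (hw : G.PerfectInfo (G.endState w)) : G.Certain w :=
  fun w' _ htr => hw.eq_of_eqvGen (hfine _ _ (by rw [obs0_endState, obs0_endState, htr]))

end GameStructure

theorem recurringCertainty_of_cycles_through_perfect_information_general
    {n : ℕ} {V : Type} {A : Fin n → Type} {B : Fin n → Type} {B0 : Type}
    [Fintype V]
    (G : GameStructure n V A B B0)
    (hfine : ∀ v v' : V, G.obs0 v = G.obs0 v' ↔
      Relation.EqvGen (fun u u' => ∃ i, G.obs i u = G.obs i u') v v')
    (hcycle : ∀ (v : V) (c : List V), c ≠ [] → List.Chain G.Edge v c →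
      c.getLast? = some v → ∃ u ∈ c, G.PerfectInfo u) :
    G.RecurringCertainty := by
  intro π
  have hperfect := frequently_atTop_of_forall_cycle_exists hcycle π.edge
  refine Filter.frequently_atTop.1 (hperfect.mono fun ℓ hℓ => ?_)
  exact G.certain_of_perfectInfo_endState (fun v v' => (hfine v v').1)
    (by rwa [π.endState_prefixWord])

/-- If Player 0's observation is the finest coarsening of the players' observations and every
cycle of the underlying directed graph contains a perfect-information state, then the game
structure has recurring certainty. -/
theorem recurringCertainty_of_cycles_through_perfect_information
    {n : ℕ} {V : Type} {A : Fin n → Type} {B : Fin n → Type} {B0 : Type}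
    (hn : 1 ≤ n) [Fintype V] [∀ i, Fintype (A i)] [∀ i, Nonempty (A i)]
    [∀ i, Fintype (B i)] [Fintype B0]
    (G : GameStructure n V A B B0)
    (hfine : ∀ v v' : V, G.obs0 v = G.obs0 v' ↔
      Relation.EqvGen (fun u u' => ∃ i, G.obs i u = G.obs i u') v v')
    (hcycle : ∀ (v : V) (c : List V), c ≠ [] → List.Chain G.Edge v c →
      c.getLast? = some v → ∃ u ∈ c, G.PerfectInfo u) :
    G.RecurringCertainty :=
  recurringCertainty_of_cycles_through_perfect_information_general G hfine hcycle
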